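/- arXiv:2001.04742 — 9 statements merged into one kernel-verified Lean document; each statement's English description precedes it below -/
import Mathlib

section
/- (Metric Hahn–Banach) Let (X,d) be a metric space with base point x0 and Y ⊆ X a subset containing x0. For every metric functional h of Y (with the induced metric and base point x0) there exists a metric functional H of X whose restriction to Y equals h. -/
/-
The functionals `y ↦ d(y, x) - d(x₀, x)` all lie in the compact box `∏ᵧ [-d(y, x₀), d(y, x₀)]`,
so the closure of any family of them is compact. Restriction to `Y` is continuous and sends the
functional of a point of `Y`, computed in `X`, to the one computed in `Y`. A continuous image of a
compact closure is the closure of the image, so every metric functional of `Y` is the restriction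
of a limit of functionals of points of `Y`, which is a metric functional of `X`.
-/

def metricFunctionals (X : Type*) [MetricSpace X] (x0 : X) : Set (X → ℝ) :=
  closure (Set.range fun x : X => fun y : X => dist y x - dist x0 x)

open Set

section

variable {X : Type*} [PseudoMetricSpace X]

lemma distFunctional_mem_pi_Icc (x0 x : X) :
    (fun y : X => dist y x - dist x0 x) ∈ univ.pi fun y => Icc (-dist y x0) (dist y x0) :=
  fun y _ => abs_le.mp (abs_dist_sub_le y x0 x)

lemma isCompact_closure_image_distFunctional (x0 : X) (s : Set X) :
    IsCompact (closure ((fun x : X => fun y : X => dist y x - dist x0 x) '' s)) := by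
  have h_box : IsCompact (univ.pi fun y : X => Icc (-dist y x0) (dist y x0)) :=
    isCompact_univ_pi fun _ => isCompact_Icc
  refine h_box.of_isClosed_subset isClosed_closure (closure_minimal ?_ h_box.isClosed)
  rintro _ ⟨x, -, rfl⟩
  exact distFunctional_mem_pi_Icc x0 x

end

lemma metricFunctionals_subtype_subset {X : Type*} [MetricSpace X] (x0 : X) (Y : Set X)
    (hx0 : x0 ∈ Y) :
    metricFunctionals Y ⟨x0, hx0⟩ ⊆ (fun (H : X → ℝ) (y : Y) => H y) '' metricFunctionals X x0 := by
  set restrict : (X → ℝ) → (Y → ℝ) := fun H y => H y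
  set distFunctional : X → X → ℝ := fun x y => dist y x - dist x0 x
  have h_range : (range fun z : Y => fun y : Y => dist y z - dist (⟨x0, hx0⟩ : Y) z) =
      restrict '' (distFunctional '' Y) := by
    rw [image_image, image_eq_range]
    rfl
  have h_restrict : restrict '' closure (distFunctional '' Y) =
      closure (restrict '' (distFunctional '' Y)) :=
    image_closure_of_isCompact (isCompact_closure_image_distFunctional x0 Y)
      (continuous_pi fun y : Y => continuous_apply (y : X)).continuousOn
  rw [metricFunctionals, h_range, ← h_restrict]
  exact image_mono (closure_mono (image_subset_range _ _))

theorem stmt_5 (X : Type*) [MetricSpace X] (x0 : X) (Y : Set X) (hx0 : x0 ∈ Y)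
    (h : Y → ℝ) (hh : h ∈ metricFunctionals Y (⟨x0, hx0⟩ : Y)) :
    ∃ H ∈ metricFunctionals X x0, ∀ y : Y, H (y : X) = h y := by
  obtain ⟨H, hH, rfl⟩ := metricFunctionals_subtype_subset x0 Y hx0 hh
  exact ⟨H, hH, fun _ => rfl⟩
end

section
/- Let D : [0,∞) → [0,∞) be increasing, with D(0)=0, D(t)>0 for t>0, D(t) → ∞ as t → ∞, and D(t)/t → 0 monotonically as t → ∞. Then in the metric space (ℝ, D(|·−·|)) with base point 0, the functions h_n(y) = D(|y − n|) − D(|n|) converge pointwise to the zero function as n → ∞; in particular the identically-zero function is a metric functional of this space. -/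
lemma aux_bound (D : ℝ → ℝ)
    (hmono : ∀ s t : ℝ, 0 ≤ s → s ≤ t → D s ≤ D t)
    (hratio : AntitoneOn (fun t : ℝ => D t / t) (Set.Ioi (0 : ℝ)))
    {a b c : ℝ} (hc : 0 < c) (ha : c ≤ a) (hb : c ≤ b) :
    |D a - D b| ≤ |a - b| * (D c / c) := by
  wlog hab : a ≤ b generalizing a b
  · rw [abs_sub_comm, abs_sub_comm a b]
    exact this hb ha (le_of_not_ge hab)
  have ha0 : 0 < a := hc.trans_le ha
  have hb0 : 0 < b := hc.trans_le hb
  have h1 : D b / b ≤ D a / a :=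
    hratio (Set.mem_Ioi.mpr ha0) (Set.mem_Ioi.mpr hb0) hab
  have h2 : D a / a ≤ D c / c :=
    hratio (Set.mem_Ioi.mpr hc) (Set.mem_Ioi.mpr ha0) ha
  have h1' : D b * a ≤ D a * b := by
    rw [div_le_div_iff₀ hb0 ha0] at h1; linarith
  have h2' : D a * c ≤ D c * a := by
    rw [div_le_div_iff₀ ha0 hc] at h2; linarith
  have hDab : D a ≤ D b := hmono a b ha0.le hab
  rw [abs_of_nonpos (by linarith : D a - D b ≤ 0),
      abs_of_nonpos (by linarith : a - b ≤ 0)]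
  rw [mul_div_assoc', le_div_iff₀ hc]
  nlinarith [h1', h2', hc, ha0, hb0, sub_nonneg.mpr hab]

theorem stmt_8 (D : ℝ → ℝ)
    (hnonneg : ∀ t : ℝ, 0 ≤ t → 0 ≤ D t)
    (hmono : ∀ s t : ℝ, 0 ≤ s → s ≤ t → D s ≤ D t)
    (h0 : D 0 = 0) (hpos : ∀ t : ℝ, 0 < t → 0 < D t)
    (hinf : Filter.Tendsto D Filter.atTop Filter.atTop)
    (hratio : AntitoneOn (fun t : ℝ => D t / t) (Set.Ioi (0 : ℝ)))
    (hratio0 : Filter.Tendsto (fun t : ℝ => D t / t) Filter.atTop (nhds 0)) :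
    (∀ y : ℝ, Filter.Tendsto (fun n : ℕ => D |y - (n : ℝ)| - D |(n : ℝ)|)
      Filter.atTop (nhds 0)) ∧
    (fun _ : ℝ => (0 : ℝ)) ∈
      closure (Set.range fun x : ℝ => fun y : ℝ => D |y - x| - D |x|) := by
  have key : ∀ y : ℝ, Filter.Tendsto (fun n : ℕ => D |y - (n : ℝ)| - D |(n : ℝ)|)
      Filter.atTop (nhds 0) := by
    intro y
    rw [tendsto_zero_iff_abs_tendsto_zero]
    have hg : Filter.Tendsto (fun n : ℕ => |y| * (D ((n : ℝ) - |y|) / ((n : ℝ) - |y|)))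
        Filter.atTop (nhds 0) := by
      have h1 : Filter.Tendsto (fun n : ℕ => (n : ℝ) - |y|) Filter.atTop Filter.atTop :=
        Filter.tendsto_atTop_add_const_right _ _ tendsto_natCast_atTop_atTop
      have := (hratio0.comp h1).const_mul |y|
      simpa using this
    apply squeeze_zero' (Filter.Eventually.of_forall fun n => abs_nonneg _) _ hg
    filter_upwards [Filter.eventually_gt_atTop (⌈|y|⌉₊)] with n hn
    have hc : 0 < (n : ℝ) - |y| := by
      have : |y| < (n : ℝ) := lt_of_le_of_lt (Nat.le_ceil _) (by exact_mod_cast hn)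
      linarith
    have ha : (n : ℝ) - |y| ≤ |y - (n : ℝ)| := by
      cases abs_cases (y - (n : ℝ)) with
      | inl h => cases abs_cases y with
        | inl h' => linarith [h.1]
        | inr h' => linarith [h.1]
      | inr h => cases abs_cases y with
        | inl h' => linarith [h.1]
        | inr h' => linarith [h.1]
    set A := |y - (n : ℝ)| with hA
    set B := |(n : ℝ)| with hB
    have hBn : B = (n : ℝ) := abs_of_nonneg (Nat.cast_nonneg n)
    have hb : (n : ℝ) - |y| ≤ B := by rw [hBn]; linarith [abs_nonneg y]
    have hdiff : |A - B| ≤ |y| := by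
      have h := abs_abs_sub_abs_le_abs_sub (y - (n : ℝ)) (-(n : ℝ))
      rw [abs_neg] at h
      have h2 : y - (n : ℝ) - -(n : ℝ) = y := by ring
      rw [h2] at h
      exact h
    calc |D A - D B|
        ≤ |A - B| * (D ((n : ℝ) - |y|) / ((n : ℝ) - |y|)) :=
          aux_bound D hmono hratio hc ha hb
      _ ≤ |y| * (D ((n : ℝ) - |y|) / ((n : ℝ) - |y|)) := by
          apply mul_le_mul_of_nonneg_right hdiff
          exact div_nonneg (hnonneg _ hc.le) hc.le
  refine ⟨key, ?_⟩
  have hmem : ∀ᶠ n : ℕ in Filter.atTop,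
      (fun y : ℝ => D |y - (n : ℝ)| - D |(n : ℝ)|) ∈
        Set.range (fun x : ℝ => fun y : ℝ => D |y - x| - D |x|) :=
    Filter.Eventually.of_forall fun n => ⟨(n : ℝ), rfl⟩
  exact mem_closure_of_tendsto (tendsto_pi_nhds.mpr key) hmem
end

section
/- (Tracial property of translation numbers) For any two semi-contractions f, g of a metric space X, τ(gf) = τ(fg), where τ denotes the translation number. -/
lemma aux_tracial (X : Type*) [MetricSpace X]
    (f g : X → X)
    (hf : ∀ y z : X, dist (f y) (f z) ≤ dist y z)
    (hg : ∀ y z : X, dist (g y) (g z) ≤ dist y z)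
    (x : X) (τ₁ τ₂ : ℝ)
    (h₁ : Filter.Tendsto (fun n : ℕ => dist x ((g ∘ f)^[n] x) / n) Filter.atTop (nhds τ₁))
    (h₂ : Filter.Tendsto (fun n : ℕ => dist x ((f ∘ g)^[n] x) / n) Filter.atTop (nhds τ₂)) :
    τ₂ ≤ τ₁ := by
  have hfg : ∀ n (a b : X), dist ((f ∘ g)^[n] a) ((f ∘ g)^[n] b) ≤ dist a b := by
    intro n
    induction n with
    | zero => simp
    | succ k ih =>
      intro a b
      rw [Function.iterate_succ_apply, Function.iterate_succ_apply]
      exact le_trans (ih _ _) (le_trans (hf _ _) (hg _ _))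
  have hsc : ∀ n : ℕ, (f ∘ g)^[n] (f x) = f ((g ∘ f)^[n] x) := by
    intro n
    have : Function.Semiconj f (g ∘ f) (f ∘ g) := fun y => rfl
    exact ((this.iterate_right n) x).symm
  have key : ∀ n : ℕ, dist x ((f ∘ g)^[n] x) ≤ dist x ((g ∘ f)^[n] x) + 2 * dist x (f x) := by
    intro n
    calc dist x ((f ∘ g)^[n] x)
        ≤ dist x (f x) + dist (f x) ((f ∘ g)^[n] (f x)) + dist ((f ∘ g)^[n] (f x)) ((f ∘ g)^[n] x) :=
          dist_triangle4 _ _ _ _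
      _ ≤ dist x (f x) + dist x ((g ∘ f)^[n] x) + dist (f x) x := by
          gcongr
          · rw [hsc n]; exact hf _ _
          · exact hfg n _ _
      _ = dist x ((g ∘ f)^[n] x) + 2 * dist x (f x) := by
          rw [dist_comm (f x) x]; ring
  have hlim : Filter.Tendsto
      (fun n : ℕ => (dist x ((g ∘ f)^[n] x) + 2 * dist x (f x)) / n) Filter.atTop (nhds (τ₁ + 0)) := by
    have hc : Filter.Tendsto (fun n : ℕ => (2 * dist x (f x)) / n) Filter.atTop (nhds 0) :=
      tendsto_const_div_atTop_nhds_zero_nat _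
    have := h₁.add hc
    simpa [add_div] using this
  rw [add_zero] at hlim
  refine le_of_tendsto_of_tendsto' h₂ hlim (fun n => ?_)
  rcases Nat.eq_zero_or_pos n with h | h
  · simp [h]
  · exact (div_le_div_iff_of_pos_right (by exact_mod_cast h)).mpr (key n)

theorem stmt_11 (X : Type*) [MetricSpace X]
    (f g : X → X)
    (hf : ∀ y z : X, dist (f y) (f z) ≤ dist y z)
    (hg : ∀ y z : X, dist (g y) (g z) ≤ dist y z)
    (x : X) (τ₁ τ₂ : ℝ)
    (h₁ : Filter.Tendsto (fun n : ℕ => dist x ((g ∘ f)^[n] x) / n) Filter.atTop (nhds τ₁))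
    (h₂ : Filter.Tendsto (fun n : ℕ => dist x ((f ∘ g)^[n] x) / n) Filter.atTop (nhds τ₂)) :
    τ₁ = τ₂ :=
  le_antisymm (aux_tracial X g f hg hf x τ₂ τ₁ h₂ h₁) (aux_tracial X f g hf hg x τ₁ τ₂ h₁ h₂)
end

section
/- Suppose f is a semi-contraction of a metric space X with inf_x d(x, f(x)) = 0. Then there exists a metric functional h of X such that h(f(x)) ≤ h(x) for all x ∈ X. -/
theorem stmt_12 (X : Type*) [MetricSpace X] (x0 : X)
    (f : X → X) (hf : ∀ y z : X, dist (f y) (f z) ≤ dist y z)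
    (hdisp : ∀ ε : ℝ, 0 < ε → ∃ x : X, dist x (f x) ≤ ε) :
    ∃ h ∈ metricFunctionals X x0, ∀ x : X, h (f x) ≤ h x := by
  set Φ : X → X → ℝ := fun x : X => fun y : X => dist y x - dist x0 x with hΦ
  set K : Set (X → ℝ) := Set.pi Set.univ fun y : X => Set.Icc (-(dist x0 y)) (dist x0 y)
    with hK
  have hKc : IsCompact K := isCompact_univ_pi fun y => isCompact_Icc
  have hrange : Set.range Φ ⊆ K := by
    rintro - ⟨z, rfl⟩ y -
    constructor
    · have := dist_triangle x0 y z
      simp only [Φ]; linarith [dist_comm y z ▸ this]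
    · have := dist_triangle y x0 z
      simp only [Φ]; linarith [dist_comm y x0 ▸ this]
  set N : ℕ → Set X := fun n => {x : X | dist x (f x) ≤ 1 / (n + 1)} with hN
  set C : ℕ → Set (X → ℝ) := fun n => closure (Φ '' N n) with hC
  have hCK : ∀ n, C n ⊆ K := fun n =>
    closure_minimal ((Set.image_subset_range Φ _).trans hrange) (hKc.isClosed)
  have hCne : ∀ n, (C n).Nonempty := by
    intro n
    obtain ⟨x, hx⟩ := hdisp (1 / (n + 1)) (by positivity)
    exact ⟨Φ x, subset_closure ⟨x, hx, rfl⟩⟩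
  have hCnested : ∀ n, C (n + 1) ⊆ C n := by
    intro n
    apply closure_mono
    apply Set.image_mono
    intro x hx
    simp only [hN, Set.mem_setOf_eq] at hx ⊢
    refine hx.trans ?_
    gcongr
    linarith
  have hCcl : ∀ n, IsClosed (C n) := fun n => isClosed_closure
  have hmain : (⋂ n, C n).Nonempty := by
    refine IsCompact.nonempty_iInter_of_sequence_nonempty_isCompact_isClosed C
      hCnested hCne ?_ hCcl
    exact hKc.of_isClosed_subset (hCcl 0) (hCK 0)
  obtain ⟨h, hh⟩ := hmain
  simp only [Set.mem_iInter] at hh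
  refine ⟨h, ?_, ?_⟩
  · exact closure_mono (Set.image_subset_range Φ _) (hh 0)
  · intro x
    have key : ∀ n : ℕ, h (f x) ≤ h x + 1 / (n + 1) := by
      intro n
      have hclosed : IsClosed {g : X → ℝ | g (f x) ≤ g x + 1 / (n + 1)} :=
        isClosed_le (continuous_apply (f x)) ((continuous_apply x).add continuous_const)
      have hsub : Φ '' N n ⊆ {g : X → ℝ | g (f x) ≤ g x + 1 / (n + 1)} := by
        rintro - ⟨z, hz, rfl⟩
        simp only [Set.mem_setOf_eq, Φ]
        have h1 : dist (f x) z ≤ dist (f x) (f z) + dist (f z) z := dist_triangle _ _ _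
        have h2 : dist (f x) (f z) ≤ dist x z := hf x z
        have h3 : dist (f z) z = dist z (f z) := dist_comm _ _
        simp only [hN, Set.mem_setOf_eq] at hz
        linarith [hz]
      exact closure_minimal hsub hclosed (hh n)
    refine le_of_forall_pos_le_add ?_
    intro ε hε
    obtain ⟨n, hn⟩ := exists_nat_one_div_lt hε
    exact (key n).trans (by linarith)
end

section
/- Suppose g is an isometry of a metric space X with inf_x d(x, g(x)) = 0. Then there exists a metric functional h of X such that h(g(x)) = h(x) for all x ∈ X. -/
theorem stmt_13 (X : Type*) [MetricSpace X] (x0 : X)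
    (g : X → X) (hg : Isometry g)
    (hdisp : ∀ ε : ℝ, 0 < ε → ∃ x : X, dist x (g x) ≤ ε) :
    ∃ h ∈ metricFunctionals X x0, ∀ x : X, h (g x) = h x := by
  -- choose a sequence of almost-fixed points
  have hx : ∀ n : ℕ, ∃ x : X, dist x (g x) ≤ 1 / (n + 1) := by
    intro n
    exact hdisp _ (by positivity)
  choose x hxd using hx
  set φ : ℕ → X → ℝ := fun n => fun y => dist y (x n) - dist x0 (x n) with hφ
  -- the compact set
  set K : Set (X → ℝ) := Set.univ.pi fun y => Set.Icc (-(dist y x0)) (dist y x0) with hK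
  have hKc : IsCompact K := isCompact_univ_pi fun y => isCompact_Icc
  have hmem : ∀ n, φ n ∈ K := by
    intro n y _
    have := abs_le.mp (abs_dist_sub_le y x0 (x n))
    simp only [hφ, Set.mem_Icc]
    constructor <;> linarith [this.1, this.2]
  -- ultrafilter extending atTop
  let U : Ultrafilter ℕ := Ultrafilter.of Filter.atTop
  have hUle : (U : Filter ℕ) ≤ Filter.atTop := Ultrafilter.of_le _
  have hle : (U.map φ : Filter (X → ℝ)) ≤ Filter.principal K := by
    rw [Filter.le_principal_iff]
    exact Filter.mem_map.mpr (Filter.univ_mem' hmem)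
  obtain ⟨h, hhK, hconv⟩ := hKc.ultrafilter_le_nhds (U.map φ) hle
  have htend : Filter.Tendsto φ U (nhds h) := hconv
  refine ⟨h, ?_, ?_⟩
  · -- h is in the closure of the range
    refine mem_closure_of_tendsto htend ?_
    exact Filter.Eventually.of_forall fun n => ⟨x n, rfl⟩
  · intro y
    have hpt : ∀ z : X, Filter.Tendsto (fun n => φ n z) U (nhds (h z)) := by
      intro z
      exact (tendsto_pi_nhds.mp htend) z
    have h1 : Filter.Tendsto (fun n => φ n (g y) - φ n y) U (nhds (h (g y) - h y)) :=
      (hpt (g y)).sub (hpt y)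
    -- the difference tends to 0
    have hbound : ∀ n, |φ n (g y) - φ n y| ≤ dist (x n) (g (x n)) := by
      intro n
      have e1 : dist (g y) (g (x n)) = dist y (x n) := hg.dist_eq y (x n)
      have t1 : dist (g y) (x n) ≤ dist y (x n) + dist (x n) (g (x n)) := by
        calc dist (g y) (x n) ≤ dist (g y) (g (x n)) + dist (g (x n)) (x n) :=
              dist_triangle _ _ _
          _ = dist y (x n) + dist (x n) (g (x n)) := by rw [e1, dist_comm (g (x n))]
      have t2 : dist y (x n) ≤ dist (g y) (x n) + dist (x n) (g (x n)) := by
        calc dist y (x n) = dist (g y) (g (x n)) := e1.symm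
          _ ≤ dist (g y) (x n) + dist (x n) (g (x n)) := dist_triangle _ _ _
      have : φ n (g y) - φ n y = dist (g y) (x n) - dist y (x n) := by
        simp only [hφ]; ring
      rw [this, abs_le]
      constructor <;> linarith
    have hd0 : Filter.Tendsto (fun n : ℕ => dist (x n) (g (x n))) Filter.atTop (nhds 0) := by
      apply squeeze_zero (fun n => dist_nonneg) hxd
      exact tendsto_one_div_add_atTop_nhds_zero_nat
    have h2 : Filter.Tendsto (fun n => φ n (g y) - φ n y) Filter.atTop (nhds 0) := by
      apply squeeze_zero_norm _ hd0
      intro n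
      simpa using hbound n
    have h3 : Filter.Tendsto (fun n => φ n (g y) - φ n y) U (nhds 0) := h2.mono_left hUle
    have := tendsto_nhds_unique h1 h3
    linarith
end

section
/- Let Γ be an infinite finitely generated group with Cayley graph X for a finite generating set. Then the metric boundary ∂X (the metric compactification minus the image of X) contains at least two points. -/
noncomputable def wordLength {Γ : Type*} [Group Γ] (S : Set Γ) (g : Γ) : ℕ :=
  sInf {n : ℕ | ∃ w : List Γ, w.length = n ∧ (∀ x ∈ w, x ∈ S ∨ x⁻¹ ∈ S) ∧ g = w.prod}

noncomputable def wordDist {Γ : Type*} [Group Γ] (S : Set Γ) (x g : Γ) : ℝ :=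
  (wordLength S (x⁻¹ * g) : ℝ)

noncomputable def cayleyMetricFunctionals (Γ : Type*) [Group Γ] (S : Set Γ) : Set (Γ → ℝ) :=
  closure (Set.range fun g : Γ => fun x : Γ => wordDist S x g - wordDist S 1 g)

/-- The metric boundary of the Cayley graph: metric functionals which are not of
the form `x ↦ d(x,g) - d(e,g)` for some `g ∈ Γ`. -/
noncomputable def cayleyMetricBoundary (Γ : Type*) [Group Γ] (S : Set Γ) : Set (Γ → ℝ) :=
  cayleyMetricFunctionals Γ S \
    Set.range (fun g : Γ => fun x : Γ => wordDist S x g - wordDist S 1 g)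

section Aux

variable {Γ : Type*} [Group Γ] {S : Set Γ}

lemma wl_set_nonempty (hSgen : Subgroup.closure S = ⊤) (g : Γ) :
    {n : ℕ | ∃ w : List Γ, w.length = n ∧ (∀ x ∈ w, x ∈ S ∨ x⁻¹ ∈ S) ∧ g = w.prod}.Nonempty := by
  have hg : g ∈ Submonoid.closure (S ∪ S⁻¹) := by
    have h1 : g ∈ (Subgroup.closure S).toSubmonoid := by
      rw [hSgen]; trivial
    rwa [Subgroup.closure_toSubmonoid] at h1
  obtain ⟨w, hw, hp⟩ := Submonoid.exists_list_of_mem_closure hg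
  refine ⟨w.length, w, rfl, fun x hx => ?_, hp.symm⟩
  rcases hw x hx with h | h
  · exact Or.inl h
  · exact Or.inr (Set.mem_inv.mp h)

lemma wl_exists (hSgen : Subgroup.closure S = ⊤) (g : Γ) :
    ∃ w : List Γ, w.length = wordLength S g ∧ (∀ x ∈ w, x ∈ S ∨ x⁻¹ ∈ S) ∧ g = w.prod :=
  Nat.sInf_mem (wl_set_nonempty hSgen g)

lemma wl_le {g : Γ} {w : List Γ} (hw : ∀ x ∈ w, x ∈ S ∨ x⁻¹ ∈ S) (hp : g = w.prod) :
    wordLength S g ≤ w.length :=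
  Nat.sInf_le ⟨w, rfl, hw, hp⟩

lemma wl_one : wordLength S (1 : Γ) = 0 :=
  Nat.le_zero.mp (wl_le (w := []) (by simp) (by simp))

lemma wl_mul (hSgen : Subgroup.closure S = ⊤) (g h : Γ) :
    wordLength S (g * h) ≤ wordLength S g + wordLength S h := by
  obtain ⟨w1, hl1, hc1, hp1⟩ := wl_exists hSgen g
  obtain ⟨w2, hl2, hc2, hp2⟩ := wl_exists hSgen h
  have := wl_le (g := g * h) (w := w1 ++ w2) (by
    intro x hx
    rcases List.mem_append.mp hx with h | h
    · exact hc1 x h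
    · exact hc2 x h) (by rw [List.prod_append, hp1, hp2])
  simpa [hl1, hl2] using this

lemma wl_inv_le (hSgen : Subgroup.closure S = ⊤) (g : Γ) :
    wordLength S g⁻¹ ≤ wordLength S g := by
  obtain ⟨w, hl, hc, hp⟩ := wl_exists hSgen g
  have := wl_le (g := g⁻¹) (w := (w.map fun x => x⁻¹).reverse) (by
    intro x hx
    rw [List.mem_reverse, List.mem_map] at hx
    obtain ⟨y, hy, rfl⟩ := hx
    rcases hc y hy with h | h
    · exact Or.inr (by simpa using h)
    · exact Or.inl h) (by rw [hp, List.prod_inv_reverse])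
  simpa [hl] using this

lemma wl_inv (hSgen : Subgroup.closure S = ⊤) (g : Γ) :
    wordLength S g⁻¹ = wordLength S g :=
  le_antisymm (wl_inv_le hSgen g) (by simpa using wl_inv_le hSgen g⁻¹)

lemma wl_words_finite (hSfin : S.Finite) (k : ℕ) :
    {w : List Γ | w.length ≤ k ∧ ∀ y ∈ w, y ∈ S ∨ y⁻¹ ∈ S}.Finite := by
  have hT : {y : Γ | y ∈ S ∨ y⁻¹ ∈ S}.Finite := by
    have : {y : Γ | y ∈ S ∨ y⁻¹ ∈ S} = S ∪ S⁻¹ := by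
      ext y; simp [Set.mem_inv]
    rw [this]; exact hSfin.union hSfin.inv
  induction k with
  | zero =>
    refine Set.Finite.subset (Set.finite_singleton []) ?_
    rintro w ⟨hw, -⟩
    simp [List.length_eq_zero_iff.mp (Nat.le_zero.mp hw)]
  | succ k ih =>
    refine Set.Finite.subset ((hT.image2 List.cons ih).insert []) ?_
    rintro w ⟨hw, hcond⟩
    cases w with
    | nil => exact Set.mem_insert _ _
    | cons a t =>
      refine Set.mem_insert_of_mem _ (Set.mem_image2_of_mem (hcond a (by simp)) ?_)
      exact ⟨by simpa using hw, fun y hy => hcond y (List.mem_cons_of_mem a hy)⟩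

lemma wl_ball_finite (hSgen : Subgroup.closure S = ⊤) (hSfin : S.Finite) (k : ℕ) :
    {x : Γ | wordLength S x ≤ k}.Finite := by
  refine Set.Finite.subset ((wl_words_finite hSfin k).image List.prod) ?_
  intro x hx
  obtain ⟨w, hl, hc, hp⟩ := wl_exists hSgen x
  exact ⟨w, ⟨hl.le.trans hx, hc⟩, hp.symm⟩

lemma wl_exists_ge [Infinite Γ] (hSgen : Subgroup.closure S = ⊤) (hSfin : S.Finite) (n : ℕ) :
    ∃ c : Γ, n ≤ wordLength S c := by
  by_contra hcon
  push_neg at hcon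
  have : (Set.univ : Set Γ).Finite := by
    refine (wl_ball_finite hSgen hSfin n).subset fun x _ => (hcon x).le
  exact Set.infinite_univ this

lemma wl_prefix (hSgen : Subgroup.closure S = ⊤) (c : Γ) (k : ℕ) (hk : k ≤ wordLength S c) :
    ∃ γ : Γ, wordLength S γ ≤ k ∧ wordLength S (γ⁻¹ * c) + k ≤ wordLength S c := by
  obtain ⟨w, hl, hc, hp⟩ := wl_exists hSgen c
  refine ⟨(w.take k).prod, ?_, ?_⟩
  · have := wl_le (g := (w.take k).prod) (w := w.take k)
      (fun x hx => hc x (List.mem_of_mem_take hx)) rfl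
    calc wordLength S (w.take k).prod ≤ (w.take k).length := this
    _ ≤ k := by simp [List.length_take]
  · have hdrop : ((w.take k).prod)⁻¹ * c = (w.drop k).prod := by
      have hw : w.prod = (w.take k).prod * (w.drop k).prod := by
        rw [← List.prod_append, List.take_append_drop]
      rw [hp, hw]
      group
    have h1 : wordLength S (((w.take k).prod)⁻¹ * c) ≤ (w.drop k).length := by
      rw [hdrop]
      exact wl_le (fun x hx => hc x (List.mem_of_mem_drop hx)) rfl
    have h2 : (w.drop k).length = wordLength S c - k := by
      simp [List.length_drop, hl]
    omega

end Aux

noncomputable def cayleyF {Γ : Type*} [Group Γ] (S : Set Γ) : Γ → Γ → ℝ :=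
  fun g x => wordDist S x g - wordDist S 1 g

section Aux2

variable {Γ : Type*} [Group Γ] {S : Set Γ}

lemma bd_eq (Γ : Type*) [Group Γ] (S : Set Γ) :
    cayleyMetricBoundary Γ S
      = closure (Set.range (cayleyF S)) \ Set.range (cayleyF S) := rfl

lemma cayleyF_apply (S : Set Γ) (g x : Γ) :
    cayleyF S g x = (wordLength S (x⁻¹ * g) : ℝ) - (wordLength S g : ℝ) := by
  simp [cayleyF, wordDist]

lemma cayleyF_lb (S : Set Γ) (g x : Γ) : -(wordLength S g : ℝ) ≤ cayleyF S g x := by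
  rw [cayleyF_apply]
  have : (0 : ℝ) ≤ (wordLength S (x⁻¹ * g) : ℝ) := Nat.cast_nonneg _
  linarith

lemma cayleyF_ub (hSgen : Subgroup.closure S = ⊤) (g x : Γ) :
    cayleyF S g x ≤ (wordLength S x : ℝ) := by
  rw [cayleyF_apply]
  have h1 : wordLength S (x⁻¹ * g) ≤ wordLength S x⁻¹ + wordLength S g := wl_mul hSgen _ _
  rw [wl_inv hSgen] at h1
  have := (Nat.cast_le (α := ℝ)).mpr h1
  push_cast at this
  linarith

lemma cayleyF_lb2 (hSgen : Subgroup.closure S = ⊤) (g x : Γ) :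
    -(wordLength S x : ℝ) ≤ cayleyF S g x := by
  rw [cayleyF_apply]
  have h1 : wordLength S g ≤ wordLength S x + wordLength S (x⁻¹ * g) := by
    have := wl_mul hSgen x (x⁻¹ * g)
    simpa using this
  have := (Nat.cast_le (α := ℝ)).mpr h1
  push_cast at this
  linarith

lemma K_compact (hSgen : Subgroup.closure S = ⊤) :
    IsCompact (closure (Set.range (cayleyF S))) := by
  have hKP : Set.range (cayleyF S)
      ⊆ Set.pi Set.univ (fun x : Γ => Set.Icc (-(wordLength S x : ℝ)) (wordLength S x : ℝ)) := by
    rintro f ⟨g, rfl⟩ x _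
    exact ⟨cayleyF_lb2 hSgen g x, cayleyF_ub hSgen g x⟩
  have hP : IsCompact (Set.pi Set.univ
      (fun x : Γ => Set.Icc (-(wordLength S x : ℝ)) (wordLength S x : ℝ))) :=
    isCompact_univ_pi fun _ => isCompact_Icc
  exact hP.of_isClosed_subset isClosed_closure
    (closure_minimal hKP (isClosed_set_pi fun x _ => isClosed_Icc))

omit [Group Γ] in
lemma memclosed {L : Filter (Γ → ℝ)} {f : Γ → ℝ} {s : Set (Γ → ℝ)}
    (hcl : ClusterPt f L) (hs : s ∈ L) (hcls : IsClosed s) : f ∈ s := by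
  have h1 : ClusterPt f (Filter.principal s) := hcl.mono (Filter.le_principal_iff.mpr hs)
  rw [← hcls.closure_eq]
  exact mem_closure_iff_clusterPt.mpr h1

lemma notrange {f : Γ → ℝ} (hf : ∀ k : ℕ, ∃ x : Γ, f x ≤ -(k : ℝ)) :
    f ∉ Set.range (cayleyF S) := by
  rintro ⟨g₀, rfl⟩
  obtain ⟨x, hx⟩ := hf (wordLength S g₀ + 1)
  have := cayleyF_lb S g₀ x
  push_cast at hx
  linarith

end Aux2

theorem stmt_15 (Γ : Type*) [Group Γ] [Infinite Γ]
    (S : Set Γ) (hSfin : S.Finite) (hSgen : Subgroup.closure S = ⊤) :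
    ∃ h₁ ∈ cayleyMetricBoundary Γ S, ∃ h₂ ∈ cayleyMetricBoundary Γ S, h₁ ≠ h₂ := by
  by_contra hcontra
  push_neg at hcontra
  have hKcomp : IsCompact (closure (Set.range (cayleyF S))) := K_compact hSgen
  -- Step 1: a boundary point `h` which is unbounded below
  choose c hc using wl_exists_ge (S := S) hSgen hSfin
  haveI : Filter.NeBot (Filter.map (fun n => cayleyF S (c n)) Filter.atTop) :=
    Filter.map_neBot
  obtain ⟨h, hhK, hhcl⟩ := hKcomp.exists_clusterPt
    (f := Filter.map (fun n => cayleyF S (c n)) Filter.atTop)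
    (Filter.le_principal_iff.mpr (Filter.mem_map.mpr
      (Filter.univ_mem' fun n => subset_closure ⟨c n, rfl⟩)))
  have hunb : ∀ k : ℕ, ∃ x : Γ, h x ≤ -(k : ℝ) := by
    intro k
    have hA : h ∈ ⋃ x ∈ {x : Γ | wordLength S x ≤ k}, {f : Γ → ℝ | f x ≤ -(k : ℝ)} := by
      refine memclosed hhcl ?_
        ((wl_ball_finite hSgen hSfin k).isClosed_biUnion
          fun x _ => isClosed_le (continuous_apply x) continuous_const)
      rw [Filter.mem_map]
      filter_upwards [Filter.eventually_ge_atTop k] with n hn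
      have hkW : k ≤ wordLength S (c n) := le_trans hn (hc n)
      obtain ⟨γ, hγ1, hγ2⟩ := wl_prefix hSgen (c n) k hkW
      refine Set.mem_biUnion hγ1 ?_
      show cayleyF S (c n) γ ≤ -(k : ℝ)
      rw [cayleyF_apply]
      have hcast : (wordLength S (γ⁻¹ * c n) : ℝ) + (k : ℝ) ≤ (wordLength S (c n) : ℝ) := by
        exact_mod_cast hγ2
      linarith
    simp only [Set.mem_iUnion, Set.mem_setOf_eq, exists_prop] at hA
    obtain ⟨x, -, hx⟩ := hA
    exact ⟨x, hx⟩
  have hhbd : h ∈ cayleyMetricBoundary Γ S := by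
    rw [bd_eq]; exact ⟨hhK, notrange hunb⟩
  -- Step 2: `h` is a homomorphism
  have hom : ∀ γ x : Γ, h (γ * x) = h γ + h x := by
    intro γ x
    have hTcont : Continuous (fun f : Γ → ℝ => fun y => f (γ * y) - f γ) :=
      continuous_pi fun y => ((continuous_apply (γ * y)).sub (continuous_apply γ))
    have hTmaps : Set.MapsTo (fun f : Γ → ℝ => fun y => f (γ * y) - f γ)
        (Set.range (cayleyF S)) (Set.range (cayleyF S)) := by
      rintro f ⟨g, rfl⟩
      refine ⟨γ⁻¹ * g, ?_⟩
      funext y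
      show cayleyF S (γ⁻¹ * g) y = cayleyF S g (γ * y) - cayleyF S g γ
      simp only [cayleyF_apply]
      have e1 : (γ * y)⁻¹ * g = y⁻¹ * (γ⁻¹ * g) := by group
      rw [e1]
      ring
    have hTK : (fun y => h (γ * y) - h γ) ∈ closure (Set.range (cayleyF S)) :=
      map_mem_closure hTcont hhK hTmaps
    have hTunb : ∀ k : ℕ, ∃ x : Γ, h (γ * x) - h γ ≤ -(k : ℝ) := by
      intro k
      obtain ⟨k', hk'⟩ := exists_nat_ge ((k : ℝ) - h γ)
      obtain ⟨x', hx'⟩ := hunb k'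
      refine ⟨γ⁻¹ * x', ?_⟩
      rw [mul_inv_cancel_left]
      linarith
    have hTbd : (fun y => h (γ * y) - h γ) ∈ cayleyMetricBoundary Γ S := by
      rw [bd_eq]; exact ⟨hTK, notrange hTunb⟩
    have heq := hcontra h hhbd _ hTbd
    have := congrFun heq x
    linarith
  have hone : h 1 = 0 := by
    have := hom 1 1
    rw [one_mul] at this
    linarith
  -- Step 3: an element with positive drift
  obtain ⟨g, hg⟩ := hunb 1
  push_cast at hg
  have hu1 : 1 ≤ h g⁻¹ := by
    have := hom g⁻¹ g
    rw [inv_mul_cancel, hone] at this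
    linarith
  set u : Γ := g⁻¹ with hudef
  have hpow : ∀ k : ℕ, h (u ^ k) = (k : ℝ) * h u := by
    intro k
    induction k with
    | zero => simpa using hone
    | succ k ih =>
      rw [pow_succ, hom (u ^ k) u, ih]
      push_cast
      ring
  have hWh : ∀ x : Γ, h x ≤ (wordLength S x : ℝ) := by
    intro x
    have hsub : closure (Set.range (cayleyF S)) ⊆ {f : Γ → ℝ | f x ≤ (wordLength S x : ℝ)} :=
      closure_minimal (by rintro f ⟨g', rfl⟩; exact cayleyF_ub hSgen g' x)
        (isClosed_le (continuous_apply x) continuous_const)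
    exact hsub hhK
  have ham : ∀ n : ℕ, (n : ℝ) * h u ≤ (wordLength S (u ^ n) : ℝ) := by
    intro n
    have := hWh (u ^ n)
    rw [hpow n] at this
    exact this
  -- Step 4: record times for the subadditive sequence
  set δ : ℝ := h u / 2 with hδdef
  have hδpos : 0 < δ := by rw [hδdef]; linarith
  set b : ℕ → ℝ := fun n => (wordLength S (u ^ n) : ℝ) - δ * n with hbdef
  have hbge : ∀ n : ℕ, (n : ℝ) * δ ≤ b n := by
    intro n
    have h1 := ham n
    simp only [hbdef, hδdef]
    have : (n : ℝ) * (h u / 2) + (h u / 2) * n = (n : ℝ) * h u := by ring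
    linarith
  have hbtop : Filter.Tendsto b Filter.atTop Filter.atTop := by
    refine Filter.tendsto_atTop_mono hbge ?_
    exact (tendsto_natCast_atTop_atTop (R := ℝ)).atTop_mul_const hδpos
  have hfreq : ∀ N : ℕ, ∃ n, N ≤ n ∧ ∀ j ≤ n, b j ≤ b n := by
    intro N
    obtain ⟨j₀, hj₀mem, hj₀max⟩ := (Finset.range (N + 1)).exists_max_image b ⟨0, by simp⟩
    obtain ⟨N₁, hN₁⟩ := (hbtop.eventually_gt_atTop (b j₀)).exists
    obtain ⟨n, hnmem, hnmax⟩ := (Finset.range (N₁ + 1)).exists_max_image b ⟨0, by simp⟩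
    have hnN₁ : n ≤ N₁ := by have := Finset.mem_range.mp hnmem; omega
    have hN₁n : b N₁ ≤ b n := hnmax N₁ (by simp)
    have hnN : N < n := by
      by_contra hle
      push_neg at hle
      have := hj₀max n (Finset.mem_range.mpr (by omega))
      linarith
    exact ⟨n, hnN.le, fun j hj => hnmax j (Finset.mem_range.mpr (by omega))⟩
  -- Step 5: second boundary point via records
  set R : Set ℕ := {n : ℕ | ∀ j ≤ n, b j ≤ b n} with hRdef
  have hRne : Filter.NeBot (Filter.atTop ⊓ Filter.principal R) := by
    rw [← Filter.frequently_iff_neBot]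
    rw [Filter.frequently_atTop]
    intro N
    obtain ⟨n, hn1, hn2⟩ := hfreq N
    exact ⟨n, hn1, hn2⟩
  haveI := hRne
  haveI : Filter.NeBot
      (Filter.map (fun n => cayleyF S (u ^ n)) (Filter.atTop ⊓ Filter.principal R)) :=
    Filter.map_neBot
  obtain ⟨h₁, hh₁K, hh₁cl⟩ := hKcomp.exists_clusterPt
    (f := Filter.map (fun n => cayleyF S (u ^ n)) (Filter.atTop ⊓ Filter.principal R))
    (Filter.le_principal_iff.mpr (Filter.mem_map.mpr
      (Filter.univ_mem' fun n => subset_closure ⟨u ^ n, rfl⟩)))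
  have hh₁val : ∀ k : ℕ, h₁ (u ^ k) ≤ -(δ * k) := by
    intro k
    refine memclosed hh₁cl ?_ (isClosed_le (continuous_apply (u ^ k)) continuous_const)
    rw [Filter.mem_map]
    have hmem : {n : ℕ | k ≤ n} ∩ R ∈ Filter.atTop ⊓ Filter.principal R :=
      Filter.inter_mem (Filter.mem_inf_of_left (Filter.mem_atTop k))
        (Filter.mem_inf_of_right (Filter.mem_principal_self R))
    refine Filter.mem_of_superset hmem ?_
    rintro n ⟨hkn, hnR⟩
    show cayleyF S (u ^ n) (u ^ k) ≤ -(δ * k)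
    have e0 : u ^ n = u ^ k * u ^ (n - k) := by rw [← pow_add, Nat.add_sub_cancel' hkn]
    have e1 : (u ^ k)⁻¹ * u ^ n = u ^ (n - k) := by rw [e0, inv_mul_cancel_left]
    rw [cayleyF_apply, e1]
    have hrec : b (n - k) ≤ b n := hnR (n - k) (Nat.sub_le n k)
    simp only [hbdef] at hrec
    have hcast : ((n - k : ℕ) : ℝ) = (n : ℝ) - (k : ℝ) := by
      exact_mod_cast Nat.cast_sub hkn
    rw [hcast] at hrec
    linarith
  have hδhalf : (1 : ℝ) / 2 ≤ δ := by rw [hδdef]; linarith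
  have hh₁unb : ∀ k : ℕ, ∃ x : Γ, h₁ x ≤ -(k : ℝ) := by
    intro k
    refine ⟨u ^ (2 * k), ?_⟩
    have h1 := hh₁val (2 * k)
    have h2 : (k : ℝ) ≤ δ * (2 * k : ℕ) := by
      have hk0 : (0 : ℝ) ≤ (k : ℝ) := Nat.cast_nonneg k
      push_cast
      nlinarith
    linarith
  have hh₁bd : h₁ ∈ cayleyMetricBoundary Γ S := by
    rw [bd_eq]; exact ⟨hh₁K, notrange hh₁unb⟩
  have heq : h = h₁ := hcontra h hhbd h₁ hh₁bd
  have hval := hh₁val 1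
  rw [← heq, pow_one] at hval
  rw [hδdef] at hval
  push_cast at hval
  linarith
end

section
/- Let X be a metric space with base point x0 and let h be a metric functional of X fixed by an isometry group Γ acting on X (i.e. h(γ⁻¹x) − h(γ⁻¹x0) = h(x) for all γ ∈ Γ, x ∈ X). Then the map T : Γ → ℝ, T(γ) = h(γ x0), is a group homomorphism satisfying |T(γ)| ≤ d(x0, γ x0). -/
lemma metricFunctionals_props {X : Type*} [MetricSpace X] {x0 : X} {h : X → ℝ}
    (hh : h ∈ metricFunctionals X x0) :
    h x0 = 0 ∧ ∀ y z : X, |h y - h z| ≤ dist y z := by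
  have hcl : IsClosed {f : X → ℝ | f x0 = 0 ∧ ∀ y z : X, |f y - f z| ≤ dist y z} := by
    apply IsClosed.inter
    · exact isClosed_eq (continuous_apply x0) continuous_const
    · have : {f : X → ℝ | ∀ y z : X, |f y - f z| ≤ dist y z} =
          ⋂ y, ⋂ z, {f : X → ℝ | |f y - f z| ≤ dist y z} := by
        ext f; simp [Set.mem_iInter]
      show IsClosed {f : X → ℝ | ∀ y z : X, |f y - f z| ≤ dist y z}
      rw [this]
      refine isClosed_iInter fun y => isClosed_iInter fun z => ?_
      exact isClosed_le (((continuous_apply y).sub (continuous_apply z)).abs) continuous_const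
  have := closure_minimal (s := Set.range fun x : X => fun y : X => dist y x - dist x0 x)
    (fun f hf => by
      obtain ⟨x, rfl⟩ := hf
      refine ⟨by simp, fun y z => ?_⟩
      have := abs_dist_sub_le y z x
      simpa using this) hcl
  exact this hh

theorem stmt_16 (X : Type*) [MetricSpace X] (x0 : X)
    (Γ : Type*) [Group Γ] [MulAction Γ X]
    (hiso : ∀ γ : Γ, Isometry (fun x : X => γ • x))
    (h : X → ℝ) (hh : h ∈ metricFunctionals X x0)
    (hfix : ∀ (γ : Γ) (x : X), h (γ⁻¹ • x) - h (γ⁻¹ • x0) = h x) :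
    (∀ γ₁ γ₂ : Γ, h ((γ₁ * γ₂) • x0) = h (γ₁ • x0) + h (γ₂ • x0)) ∧
    (∀ γ : Γ, |h (γ • x0)| ≤ dist x0 (γ • x0)) := by
  obtain ⟨h0, hlip⟩ := metricFunctionals_props hh
  constructor
  · intro γ₁ γ₂
    have := hfix γ₁⁻¹ (γ₂ • x0)
    simp only [inv_inv] at this
    rw [mul_smul]
    linarith
  · intro γ
    have := hlip (γ • x0) x0
    rw [h0, sub_zero, dist_comm] at this
    exact this
end

section
/- Let g be an isometry of a metric space X, monotone in the sense that n ↦ d(x0, gⁿx0) tends to infinity monotonically for large n, and suppose τ(g) = 0. Then there exists a metric functional h of the orbit Y = {gⁿx0 : n ∈ ℤ} (with the induced metric) that vanishes on the entire orbit: h(gⁿx0) = 0 for all n ∈ ℤ. -/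
open Filter Topology Set

theorem add_mul_le_of_forall_add_le {u : ℕ → ℝ} {N K : ℕ} {ε : ℝ}
    (h : ∀ n ≥ N, u n + ε ≤ u (n + K)) (k : ℕ) : u N + k * ε ≤ u (N + K * k) := by
  induction k with
  | zero => simp
  | succ k ih =>
    have := h (N + K * k) (by omega)
    rw [show N + K * (k + 1) = N + K * k + K by ring]
    push_cast
    linarith

theorem exists_sub_lt_of_tendsto_div_atTop_zero {u : ℕ → ℝ}
    (hu : Tendsto (fun n : ℕ => u n / n) atTop (𝓝 0)) (K N : ℕ) {ε : ℝ} (hε : 0 < ε) :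
    ∃ n ≥ N, u (n + K) - u n < ε := by
  by_contra! h
  rcases Nat.eq_zero_or_pos K with rfl | hK
  · linarith [h N le_rfl, show u (N + 0) - u N = 0 by simp]
  set δ := ε / (2 * K)
  have hδ : 0 < δ := by positivity
  obtain ⟨n₀, hn₀⟩ := eventually_atTop.1 (hu.eventually (gt_mem_nhds hδ))
  set N' := max N n₀ + 1
  have hgain := add_mul_le_of_forall_add_le (u := u) (N := N') (K := K) (ε := ε)
    (fun n hn => by linarith [h n (by omega)])
  obtain ⟨k, hk⟩ := exists_nat_gt (2 * (δ * N' - u N') / ε)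
  have hpos : (0 : ℝ) < ((N' + K * k : ℕ) : ℝ) := by positivity
  have hsmall : u (N' + K * k) < δ * (N' + K * k : ℕ) :=
    (div_lt_iff₀ hpos).1 (hn₀ _ (by omega))
  have hδK : δ * K = ε / 2 := by simp only [δ]; field_simp
  rw [div_lt_iff₀ hε] at hk
  push_cast at hsmall
  nlinarith [hgain k]

theorem exists_abs_sub_lt_of_monotoneOn {a : ℤ → ℝ} {N : ℤ} (ha : MonotoneOn a (Ici N))
    (hτ : Tendsto (fun n : ℕ => a n / n) atTop (𝓝 0)) (K : ℕ) {ε : ℝ} (hε : 0 < ε) :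
    ∃ c : ℤ, ∀ j : ℤ, j.natAbs ≤ K → |a (c - j) - a c| < ε := by
  obtain ⟨n, hnN, hn⟩ := exists_sub_lt_of_tendsto_div_atTop_zero hτ (2 * K) N.toNat hε
  refine ⟨n + K, fun j hj => ?_⟩
  have hle : ∀ i ∈ Icc (n : ℤ) (n + 2 * K), a n ≤ a i ∧ a i ≤ a ↑(n + 2 * K) := by
    rintro i ⟨hi₁, hi₂⟩
    exact ⟨ha (by simp; omega) (by simp; omega) hi₁,
      ha (by simp; omega) (by simp; omega) (by push_cast; exact hi₂)⟩
  have h₁ := hle (n + K - j) ⟨by omega, by omega⟩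
  have h₂ := hle (n + K) ⟨by omega, by omega⟩
  rw [abs_sub_lt_iff]
  constructor <;> linarith

theorem exists_seq_tendsto_sub_zero_of_monotoneOn {a : ℤ → ℝ} {N : ℤ}
    (ha : MonotoneOn a (Ici N)) (hτ : Tendsto (fun n : ℕ => a n / n) atTop (𝓝 0)) :
    ∃ c : ℕ → ℤ, ∀ j : ℤ, Tendsto (fun k => a (c k - j) - a (c k)) atTop (𝓝 0) := by
  choose c hc using fun k : ℕ =>
    exists_abs_sub_lt_of_monotoneOn ha hτ k (Nat.one_div_pos_of_nat (n := k))
  refine ⟨c, fun j => squeeze_zero_norm' ?_ tendsto_one_div_add_atTop_nhds_zero_nat⟩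
  filter_upwards [eventually_ge_atTop j.natAbs] with k hk
  exact (hc k j (by omega)).le

namespace IsometryEquiv

variable {X : Type*} [PseudoMetricSpace X]

def toPermHom : (X ≃ᵢ X) →* Equiv.Perm X :=
  MonoidHom.mk' toEquiv fun _ _ => rfl

theorem toEquiv_zpow (g : X ≃ᵢ X) (n : ℤ) : g.toEquiv ^ n = (g ^ n).toEquiv :=
  (map_zpow toPermHom g n).symm

theorem dist_toEquiv_zpow_apply (g : X ≃ᵢ X) (x : X) (m n : ℤ) :
    dist ((g.toEquiv ^ m) x) ((g.toEquiv ^ n) x) = dist x ((g.toEquiv ^ (n - m)) x) := by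
  have : g ^ n = g ^ m * g ^ (n - m) := by rw [← zpow_add, add_sub_cancel]
  rw [toEquiv_zpow, toEquiv_zpow, toEquiv_zpow, coe_toEquiv, coe_toEquiv, coe_toEquiv, this,
    mul_apply, (g ^ m).dist_eq]

end IsometryEquiv

theorem stmt_17 (X : Type*) [MetricSpace X] (x0 : X)
    (g : X ≃ᵢ X)
    (hmono : ∃ N : ℕ, ∀ n : ℕ, N ≤ n →
      dist x0 ((g.toEquiv ^ (n : ℤ)) x0) ≤ dist x0 ((g.toEquiv ^ ((n : ℤ) + 1)) x0))
    (hτ : Filter.Tendsto (fun n : ℕ => dist x0 ((g.toEquiv ^ (n : ℤ)) x0) / n)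
      Filter.atTop (nhds 0)) :
    ∃ h ∈ metricFunctionals (Set.range fun n : ℤ => (g.toEquiv ^ n) x0)
        (⟨x0, ⟨0, by simp⟩⟩ :
          Set.range fun n : ℤ => (g.toEquiv ^ n) x0),
      ∀ n : ℤ, h ⟨(g.toEquiv ^ n) x0, ⟨n, rfl⟩⟩ = 0 := by
  obtain ⟨N, hN⟩ := hmono
  set a : ℤ → ℝ := fun n => dist x0 ((g.toEquiv ^ n) x0)
  have ha : MonotoneOn a (Ici (N : ℤ)) := by
    refine monotoneOn_of_le_add_one ordConnected_Ici fun n _ hn _ => ?_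
    lift n to ℕ using (Int.natCast_nonneg N).trans hn
    exact hN n (by exact_mod_cast mem_Ici.1 hn)
  obtain ⟨c, hc⟩ := exists_seq_tendsto_sub_zero_of_monotoneOn ha hτ
  set Y := range fun n : ℤ => (g.toEquiv ^ n) x0
  refine ⟨0, mem_closure_of_tendsto (b := atTop) (tendsto_pi_nhds.2 ?_)
    (Eventually.of_forall fun k => mem_range_self (⟨_, c k, rfl⟩ : Y)), fun _ => rfl⟩
  rintro ⟨_, j, rfl⟩
  simpa [Subtype.dist_eq, IsometryEquiv.dist_toEquiv_zpow_apply, a] using hc j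
end

section
/- Let g be an isometry of a metric space X with base point x0, and let h be any pointwise limit of a subsequence of the functions h_{gⁿx0}. Then |h(g⁻¹x) − h(x)| ≤ d(g⁻¹x0, x0) for all x ∈ X; i.e. the metric functional h is moved by g only within a uniformly bounded amount, so g fixes the class of h in the reduced metric compactification. -/
theorem stmt_18 (X : Type*) [MetricSpace X] (x0 : X)
    (g : X ≃ᵢ X) (h : X → ℝ) (φ : ℕ → ℕ) (hφ : StrictMono φ)
    (hlim : ∀ x : X, Filter.Tendsto
      (fun i : ℕ => dist x ((⇑g)^[φ i] x0) - dist x0 ((⇑g)^[φ i] x0))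
      Filter.atTop (nhds (h x))) :
    ∀ x : X, |h (g.symm x) - h x| ≤ dist (g.symm x0) x0 := by
  intro x
  have key : Filter.Tendsto (fun i : ℕ =>
      |(dist (g.symm x) ((⇑g)^[φ i] x0) - dist x0 ((⇑g)^[φ i] x0)) -
        (dist x ((⇑g)^[φ i] x0) - dist x0 ((⇑g)^[φ i] x0))|)
      Filter.atTop (nhds |h (g.symm x) - h x|) :=
    ((hlim (g.symm x)).sub (hlim x)).abs
  refine le_of_tendsto key (Filter.Eventually.of_forall fun i => ?_)
  set z := (⇑g)^[φ i] x0 with hz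
  have h1 : dist (g.symm x) z = dist x (g z) := by
    rw [← g.isometry.dist_eq (g.symm x) z, g.apply_symm_apply]
  have h2 : dist (g z) z = dist (g x0) x0 := by
    have : g z = (⇑g)^[φ i] (g x0) := by
      rw [hz, ← Function.iterate_succ_apply, Function.iterate_succ_apply']
    rw [this, hz]
    have hiter : Isometry ((⇑g)^[φ i]) := by
      induction (φ i) with
      | zero => simpa using isometry_id
      | succ n ih => rw [Function.iterate_succ]; exact ih.comp g.isometry
    exact hiter.dist_eq (g x0) x0
  have h3 : dist (g.symm x0) x0 = dist (g x0) x0 := by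
    rw [← g.isometry.dist_eq (g.symm x0) x0, g.apply_symm_apply, dist_comm]
  calc |(dist (g.symm x) z - dist x0 z) - (dist x z - dist x0 z)|
      = |dist x (g z) - dist x z| := by rw [h1]; ring_nf
    _ = |dist (g z) x - dist z x| := by rw [dist_comm x (g z), dist_comm x z]
    _ ≤ dist (g z) z := abs_dist_sub_le _ _ _
    _ = dist (g.symm x0) x0 := by rw [h2, h3]
end
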